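/- For every n ≥ 1 and all x ∈ [0,∞)^n, H_{n,(2,2,2,2)}(x) ≥ H_{n,(3,1,1,1,1,1)}(x); that is, (h_{n,2}(x))^4 / C(n+1,2)^4 ≥ h_{n,3}(x) · (h_{n,1}(x))^5 / (C(n+2,3) · n^5). -/

import Mathlib

/-!
With `p₁, p₂, p₃` the power sums of `x`, one has `h₁ = p₁`, `2 h₂ = p₁² + p₂` and
`6 h₃ = p₁³ + 3 p₁ p₂ + 2 p₃`, and clearing denominators turns the inequality into
`(n+1)³ p₁⁵ (p₁³ + 3 p₁ p₂ + 2 p₃) ≤ n² (n+2) (p₁² + p₂)⁴`.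
In the centred moments `Q₂ = n p₂ - p₁²` and `Q₃ = n² p₃ - 3 n p₁ p₂ + 2 p₁³`
(that is, `Σ (n xᵢ - p₁)ᵏ / n` for `k = 2, 3`) the difference of the two sides is a sum of
nonnegative terms, except for `-2 (n+1)³ p₁⁵ Q₃`. By AM-GM this term is absorbed by the terms in
`p₁⁶ Q₂` and `p₁⁴ Q₂²`, since `Q₃² ≤ n Q₂³` follows from `(Σ yᵢ³)² ≤ (Σ yᵢ²)³`.
-/

/-- The complete homogeneous symmetric polynomial `h_{n,k}`, as a function on `ℝ^n`:
the sum of all monomials of total degree `k` in `x 0, …, x (n-1)` (with `h_{n,0} = 1`). -/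
noncomputable def hsym (n k : ℕ) (x : Fin n → ℝ) : ℝ :=
  ∑ d ∈ Finset.Nat.antidiagonalTuple n k, ∏ i, x i ^ d i

open Finset

lemma hsym_zero (n : ℕ) (x : Fin n → ℝ) : hsym n 0 x = 1 := by
  simp [hsym, Nat.antidiagonalTuple_zero_right]

lemma hsym_succ (n k : ℕ) (x : Fin (n + 1) → ℝ) :
    hsym (n + 1) k x = ∑ j ∈ range (k + 1), x 0 ^ j * hsym n (k - j) fun i => x i.succ := by
  simp only [hsym, mul_sum]
  rw [sum_sigma']
  refine sum_nbij' (fun d => ⟨d 0, Fin.tail d⟩) (fun p => Fin.cons p.1 p.2) ?_ ?_ ?_ ?_ ?_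
  all_goals simp only [Nat.mem_antidiagonalTuple, mem_sigma, mem_range, Order.lt_add_one_iff,
    Fin.sum_univ_succ, Fin.prod_univ_succ, Fin.cons_zero, Fin.cons_succ, Fin.cons_self_tail,
    Fin.tail_cons, Fin.tail, Sigma.eta, and_imp, implies_true]
  all_goals intros; omega

lemma hsym_one (n : ℕ) (x : Fin n → ℝ) : hsym n 1 x = ∑ i, x i := by
  induction n with
  | zero => simp [hsym]
  | succ n ih =>
    simp [hsym_succ, sum_range_succ, hsym_zero, ih, Fin.sum_univ_succ, add_comm]

lemma hsym_two (n : ℕ) (x : Fin n → ℝ) :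
    hsym n 2 x = ((∑ i, x i) ^ 2 + ∑ i, x i ^ 2) / 2 := by
  induction n with
  | zero => simp [hsym]
  | succ n ih =>
    simp only [hsym_succ, sum_range_succ, sum_range_zero, Nat.reduceSub, hsym_zero, hsym_one,
      Fin.sum_univ_succ]
    linear_combination ih fun i => x i.succ

lemma hsym_three (n : ℕ) (x : Fin n → ℝ) :
    hsym n 3 x = ((∑ i, x i) ^ 3 + 3 * (∑ i, x i) * (∑ i, x i ^ 2) + 2 * ∑ i, x i ^ 3) / 6 := by
  induction n with
  | zero => simp [hsym]
  | succ n ih =>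
    simp only [hsym_succ, sum_range_succ, sum_range_zero, Nat.reduceSub, hsym_zero, hsym_one,
      hsym_two, Fin.sum_univ_succ]
    linear_combination ih fun i => x i.succ

lemma cast_choose_two_succ (n : ℕ) : ((n + 1).choose 2 : ℝ) = n * (n + 1) / 2 := by
  rw [Nat.cast_choose_eq_ascPochhammer_div]
  simp [ascPochhammer_succ_eval, Nat.factorial]

lemma cast_choose_three_add_two (n : ℕ) : ((n + 2).choose 3 : ℝ) = n * (n + 1) * (n + 2) / 6 := by
  rw [Nat.cast_choose_eq_ascPochhammer_div]
  simp [ascPochhammer_succ_eval, Nat.factorial]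

section PowerSums

variable {ι R : Type*}

section CommRing

variable [CommRing R] (s : Finset ι) (x : ι → R)

lemma sum_card_mul_sub_sum_sq :
    ∑ i ∈ s, (#s * x i - ∑ j ∈ s, x j) ^ 2 =
      #s * (#s * ∑ i ∈ s, x i ^ 2 - (∑ i ∈ s, x i) ^ 2) := by
  have (i : ι) : ((#s : R) * x i - ∑ j ∈ s, x j) ^ 2 =
      #s ^ 2 * x i ^ 2 - 2 * #s * (∑ j ∈ s, x j) * x i + (∑ j ∈ s, x j) ^ 2 := by ring
  simp only [this, sum_add_distrib, sum_sub_distrib, ← mul_sum, sum_const, nsmul_eq_mul]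
  ring

lemma sum_card_mul_sub_sum_pow_three :
    ∑ i ∈ s, (#s * x i - ∑ j ∈ s, x j) ^ 3 =
      #s * (#s ^ 2 * ∑ i ∈ s, x i ^ 3 - 3 * #s * (∑ i ∈ s, x i) * ∑ i ∈ s, x i ^ 2
        + 2 * (∑ i ∈ s, x i) ^ 3) := by
  have (i : ι) : ((#s : R) * x i - ∑ j ∈ s, x j) ^ 3 =
      #s ^ 3 * x i ^ 3 - 3 * #s ^ 2 * (∑ j ∈ s, x j) * x i ^ 2
        + 3 * #s * (∑ j ∈ s, x j) ^ 2 * x i - (∑ j ∈ s, x j) ^ 3 := by ring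
  simp only [this, sum_add_distrib, sum_sub_distrib, ← mul_sum, sum_const, nsmul_eq_mul]
  ring

end CommRing

variable [CommRing R] [LinearOrder R] [IsStrictOrderedRing R]

lemma sq_sum_pow_three_le_pow_three_sum_sq (s : Finset ι) (y : ι → R) :
    (∑ i ∈ s, y i ^ 3) ^ 2 ≤ (∑ i ∈ s, y i ^ 2) ^ 3 :=
  calc (∑ i ∈ s, y i ^ 3) ^ 2 = (∑ i ∈ s, y i * y i ^ 2) ^ 2 := by simp only [← pow_succ']
    _ ≤ (∑ i ∈ s, y i ^ 2) * ∑ i ∈ s, (y i ^ 2) ^ 2 := sum_mul_sq_le_sq_mul_sq s _ _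
    _ ≤ (∑ i ∈ s, y i ^ 2) * (∑ i ∈ s, y i ^ 2) ^ 2 := by
      gcongr
      exact sum_sq_le_sq_sum_of_nonneg fun i _ => sq_nonneg _
    _ = (∑ i ∈ s, y i ^ 2) ^ 3 := by ring

lemma sq_third_central_moment_le (s : Finset ι) (x : ι → R) :
    (#s ^ 2 * ∑ i ∈ s, x i ^ 3 - 3 * #s * (∑ i ∈ s, x i) * ∑ i ∈ s, x i ^ 2
        + 2 * (∑ i ∈ s, x i) ^ 3) ^ 2 ≤
      #s * (#s * ∑ i ∈ s, x i ^ 2 - (∑ i ∈ s, x i) ^ 2) ^ 3 := by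
  rcases s.eq_empty_or_nonempty with rfl | hs
  · simp
  have h := sq_sum_pow_three_le_pow_three_sum_sq s fun i => (#s : R) * x i - ∑ j ∈ s, x j
  rw [sum_card_mul_sub_sum_sq, sum_card_mul_sub_sum_pow_three] at h
  refine le_of_mul_le_mul_left (a := (#s : R) ^ 2) ?_ (by simp [hs.card_pos])
  linear_combination h

lemma le_add_of_sq_le_four_mul {u v w : R} (hvw : 0 ≤ v + w) (h : u ^ 2 ≤ 4 * v * w) : u ≤ v + w :=
  le_of_abs_le <| abs_le_of_sq_le_sq (by nlinarith [sq_nonneg (v - w)]) hvw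

lemma ineq_of_central_moments {N Q₂ Q₃ : R} (a : R) (hN : 0 ≤ N) (hQ₂ : 0 ≤ Q₂)
    (hQ₃ : Q₃ ^ 2 ≤ N * Q₂ ^ 3) :
    (N + 1) ^ 3 * a ^ 5 * ((N + 1) * (N + 2) * a ^ 3 + 3 * (N + 2) * a * Q₂ + 2 * Q₃) ≤
      (N + 2) * ((N + 1) * a ^ 2 + Q₂) ^ 4 := by
  have amgm : 2 * (N + 1) ^ 3 * a ^ 5 * Q₃ ≤
      (N + 2) * (N + 1) ^ 3 * a ^ 6 * Q₂ + 6 * (N + 2) * (N + 1) ^ 2 * a ^ 4 * Q₂ ^ 2 := by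
    refine le_add_of_sq_le_four_mul (by positivity) ?_
    have hcoef : N * (N + 1) ≤ 6 * (N + 2) ^ 2 := by nlinarith
    calc (2 * (N + 1) ^ 3 * a ^ 5 * Q₃) ^ 2 = 4 * (N + 1) ^ 5 * a ^ 10 * (N + 1) * Q₃ ^ 2 := by ring
      _ ≤ 4 * (N + 1) ^ 5 * a ^ 10 * (N + 1) * (N * Q₂ ^ 3) := by gcongr
      _ = 4 * (N + 1) ^ 5 * a ^ 10 * Q₂ ^ 3 * (N * (N + 1)) := by ring
      _ ≤ 4 * (N + 1) ^ 5 * a ^ 10 * Q₂ ^ 3 * (6 * (N + 2) ^ 2) := by gcongr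
      _ = _ := by ring
  have rest : 0 ≤ 4 * (N + 2) * (N + 1) * a ^ 2 * Q₂ ^ 3 + (N + 2) * Q₂ ^ 4 := by positivity
  linear_combination amgm + rest

lemma ineq_of_power_sums {N a b c : R} (hN : 0 < N) (h₂ : a ^ 2 ≤ N * b)
    (h₃ : (N ^ 2 * c - 3 * N * a * b + 2 * a ^ 3) ^ 2 ≤ N * (N * b - a ^ 2) ^ 3) :
    (N + 1) ^ 3 * a ^ 5 * (a ^ 3 + 3 * a * b + 2 * c) ≤ N ^ 2 * (N + 2) * (a ^ 2 + b) ^ 4 := by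
  have h := ineq_of_central_moments a hN.le (sub_nonneg.2 h₂) h₃
  refine le_of_mul_le_mul_left (a := N ^ 2) ?_ (by positivity)
  linear_combination h

end PowerSums

theorem H_2222_ge_H_311111_general (n : ℕ) (hn : 1 ≤ n)
    (x : Fin n → ℝ) :
    hsym n 3 x * (hsym n 1 x) ^ 5 / (((n + 2).choose 3 : ℝ) * (n : ℝ) ^ 5) ≤
      (hsym n 2 x) ^ 4 / (((n + 1).choose 2 : ℝ)) ^ 4 := by
  have hN : (0 : ℝ) < n := by exact_mod_cast hn
  have key := ineq_of_power_sums hN (by simpa using sq_sum_le_card_mul_sum_sq (s := univ) (f := x))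
    (by simpa using sq_third_central_moment_le univ x)
  rw [hsym_one, hsym_two, hsym_three, cast_choose_two_succ, cast_choose_three_add_two,
    div_le_div_iff₀ (by positivity) (by positivity)]
  linear_combination ((n : ℝ) ^ 4 * (n + 1) / 96) * key

/-- Degree 8 case: for every `n ≥ 1`, `H_{n,(2,2,2,2)} ≥ H_{n,(3,1,1,1,1,1)}` on
`[0,∞)^n`: explicitly, `h_{n,2}^4 / C(n+1,2)^4 ≥ h_{n,3}·h_{n,1}^5 / (C(n+2,3)·n^5)`. -/
theorem H_2222_ge_H_311111 (n : ℕ) (hn : 1 ≤ n)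
    (x : Fin n → ℝ) (hx : ∀ i, 0 ≤ x i) :
    hsym n 3 x * (hsym n 1 x) ^ 5 / (((n + 2).choose 3 : ℝ) * (n : ℝ) ^ 5) ≤
      (hsym n 2 x) ^ 4 / (((n + 1).choose 2 : ℝ)) ^ 4 :=
  H_2222_ge_H_311111_general n hn x
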